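/- arXiv:2203.05347 — 2 statements merged into one kernel-verified Lean document; each statement's English description precedes it below -/
import Mathlib

section
/- Let g be a complex simple Lie algebra with diagram automorphism θ of order 2, g₀ its fixed subalgebra, p : h* → h₀* the restriction map, ρ the half sum of positive roots of g, ρ₀ the half sum of positive roots of g₀, and ρ_s the half sum of positive short roots of the root system Φ₀ of g₀. Then p(ρ) − ρ₀ = ρ_s. -/
open scoped InnerProductSpace
open Finset

noncomputable section

variable {E : Type*} [NormedAddCommGroup E] [InnerProductSpace ℝ E]

/-- Reflection in the hyperplane orthogonal to `α`. -/
def rsRefl (α v : E) : E := v - ((2 * inner ℝ v α / inner ℝ α α : ℝ)) • α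

/-- Axioms for a (reduced, crystallographic) root system in a Euclidean space. -/
def IsRootSystem (Φ : Finset E) : Prop :=
  Φ.Nonempty ∧ (∀ α ∈ Φ, α ≠ 0) ∧ (∀ α ∈ Φ, ∀ β ∈ Φ, rsRefl α β ∈ Φ) ∧
  (∀ α ∈ Φ, ∀ β ∈ Φ, ∃ n : ℤ, (2 * inner ℝ β α / inner ℝ α α : ℝ) = n) ∧
  (∀ α ∈ Φ, ∀ t : ℝ, t • α ∈ Φ → t = 1 ∨ t = -1)

/-- `pos` is a system of positive roots of `Φ`, cut out by a linear functional. -/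
def IsPositiveSystem (Φ pos : Finset E) : Prop :=
  ∃ f : E →ₗ[ℝ] ℝ, (∀ α ∈ Φ, f α ≠ 0) ∧ pos = Φ.filter fun α => 0 < f α

/-- Irreducibility: no nontrivial orthogonal decomposition of the set of roots. -/
def RSIrreducible (Φ : Finset E) : Prop :=
  ∀ S ⊆ Φ, (∀ α ∈ S, ∀ β ∈ Φ, β ∉ S → (inner ℝ α β : ℝ) = 0) → S = ∅ ∨ S = Φ

/-- `Φ` has exactly two root lengths `s < l` (short and long). -/
def TwoLengths (Φ : Finset E) (s l : ℝ) : Prop :=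
  0 < s ∧ s < l ∧ (∀ α ∈ Φ, ‖α‖ = s ∨ ‖α‖ = l) ∧ (∃ α ∈ Φ, ‖α‖ = s) ∧ (∃ α ∈ Φ, ‖α‖ = l)

open scoped Classical in
/-- The simple roots of a positive system: the indecomposable positive roots. -/
def simples (pos : Finset E) : Finset E :=
  pos.filter fun α => ∀ β ∈ pos, ∀ γ ∈ pos, α ≠ β + γ

/-- Half sum of a finite set of vectors. -/
def halfSum (pos : Finset E) : E := (2:ℝ)⁻¹ • ∑ β ∈ pos, β

open scoped Classical in
/-- The elements of a given length `s` (e.g. the short roots). -/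
def ofLength (Φ : Finset E) (s : ℝ) : Finset E := Φ.filter fun α => ‖α‖ = s

/-- The Weyl group: the group generated by the reflections in the roots. -/
def weylGroup (Φ : Finset E) : Subgroup (E ≃ₗ[ℝ] E) :=
  Subgroup.closure {g | ∃ α ∈ Φ, ∀ v, g v = rsRefl α v}

def weylOrbit (Φ : Finset E) (lam : E) : Set E := {v | ∃ g ∈ weylGroup Φ, g lam = v}

/-- `β` is a weight of the irreducible finite-dimensional representation with
(dominant) highest weight `lam` of the semisimple Lie algebra with root system `Φ`:
by the standard characterisation this holds iff `β` lies in the convex hull of the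
Weyl orbit of `lam` and `lam - β` lies in the root lattice. -/
def isWeight (Φ : Finset E) (lam β : E) : Prop :=
  β ∈ convexHull ℝ (weylOrbit Φ lam) ∧ lam - β ∈ AddSubgroup.closure (Φ : Set E)

/-- The orthogonal projection onto the fixed space of an order-`m` isometry,
realising the restriction map `p : h* → h₀*` of the folding setup. -/
def foldProj (θ : E ≃ₗᵢ[ℝ] E) (m : ℕ) : E → E :=
  fun v => (m : ℝ)⁻¹ • ∑ i ∈ Finset.range m, (⇑θ)^[i] v

/-- Formal exponential `e^v` in the group algebra of the weight space. -/
def fe (v : E) : AddMonoidAlgebra ℝ E := AddMonoidAlgebra.single v 1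

end

open scoped Classical in
/-- Image of a set of roots under the folding projection. -/
noncomputable def folded {E : Type*} [NormedAddCommGroup E] [InnerProductSpace ℝ E]
    (θ : E ≃ₗᵢ[ℝ] E) (m : ℕ) (Φ : Finset E) : Finset E := Φ.image (foldProj θ m)

/-!
If a root `α` is not fixed by `θ`, then `α ⊥ θ α`: otherwise the reflection of `α` in `θ α`
is `α ∓ θ α`, a root folding to `0` or to `2 • p α`, which the reducedness of `Φ₀` forbids.
Hence `‖p α‖² = ‖α‖² / 2` for such roots, while `p α = α` for fixed ones: the short roots of
`Φ₀` are the images of the non-fixed roots. A similar reflection argument shows that `p`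
identifies `α` only with `θ α`. So `∑_{α > 0} p α` counts every long positive root of `Φ₀`
once and every short one twice, i.e. `2 p(ρ) = 2 ρ₀ + 2 ρ_s`.
-/

section Folding

variable {E : Type*} [NormedAddCommGroup E] [InnerProductSpace ℝ E]

noncomputable def foldProjLinear (θ : E ≃ₗᵢ[ℝ] E) (m : ℕ) : E →ₗ[ℝ] E :=
  (m : ℝ)⁻¹ • ∑ i ∈ range m, (θ.toLinearEquiv : E →ₗ[ℝ] E) ^ i

theorem coe_foldProjLinear (θ : E ≃ₗᵢ[ℝ] E) (m : ℕ) :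
    ⇑(foldProjLinear θ m) = foldProj θ m := by
  ext v
  simp [foldProjLinear, foldProj, Module.End.pow_apply]

theorem foldProj_smul (θ : E ≃ₗᵢ[ℝ] E) (m : ℕ) (t : ℝ) (v : E) :
    foldProj θ m (t • v) = t • foldProj θ m v := by
  rw [← coe_foldProjLinear, map_smul]

theorem foldProj_sub (θ : E ≃ₗᵢ[ℝ] E) (m : ℕ) (u v : E) :
    foldProj θ m (u - v) = foldProj θ m u - foldProj θ m v := by
  rw [← coe_foldProjLinear, map_sub]

theorem foldProj_sum {ι : Type*} (θ : E ≃ₗᵢ[ℝ] E) (m : ℕ) (S : Finset ι) (f : ι → E) :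
    foldProj θ m (∑ i ∈ S, f i) = ∑ i ∈ S, foldProj θ m (f i) := by
  rw [← coe_foldProjLinear, map_sum]

theorem foldProj_of_map_eq (θ : E ≃ₗᵢ[ℝ] E) {m : ℕ} (hm : m ≠ 0) {v : E} (hv : θ v = v) :
    foldProj θ m v = v := by
  have hiter : ∀ i, (⇑θ)^[i] v = v := fun i => Function.iterate_fixed hv i
  simp only [foldProj, hiter, sum_const, card_range]
  rw [← Nat.cast_smul_eq_nsmul ℝ, smul_smul, inv_mul_cancel₀ (by exact_mod_cast hm), one_smul]

theorem norm_foldProj_le (θ : E ≃ₗᵢ[ℝ] E) (m : ℕ) (v : E) : ‖foldProj θ m v‖ ≤ ‖v‖ := by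
  have hiter : ∀ i, ‖(⇑θ)^[i] v‖ = ‖v‖ := by
    intro i
    induction i with
    | zero => rfl
    | succ i ih => rw [Function.iterate_succ_apply', θ.norm_map, ih]
  calc ‖foldProj θ m v‖ ≤ (m : ℝ)⁻¹ * ∑ i ∈ range m, ‖(⇑θ)^[i] v‖ := by
        rw [foldProj, norm_smul, Real.norm_of_nonneg (by positivity)]
        gcongr
        exact norm_sum_le _ _
    _ ≤ ‖v‖ := by
        simp only [hiter, sum_const, card_range, nsmul_eq_mul, ← mul_assoc]
        rcases Nat.eq_zero_or_pos m with rfl | hm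
        · simp
        · rw [inv_mul_cancel₀ (by positivity), one_mul]

theorem foldProj_two_apply (θ : E ≃ₗᵢ[ℝ] E) (v : E) :
    foldProj θ 2 v = (2 : ℝ)⁻¹ • (v + θ v) := by
  simp [foldProj, sum_range_succ]

theorem foldProj_two_map {θ : E ≃ₗᵢ[ℝ] E} (hθ : Function.Involutive θ) (v : E) :
    foldProj θ 2 (θ v) = foldProj θ 2 v := by
  rw [foldProj_two_apply, foldProj_two_apply, hθ v, add_comm]

theorem zero_notMem_of_reduced {S : Finset E}
    (hred : ∀ v ∈ S, ∀ t : ℝ, t • v ∈ S → t = 1 ∨ t = -1) : (0 : E) ∉ S := by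
  intro h
  have := hred 0 h 2 (by rwa [smul_zero])
  norm_num at this

theorem int_le_one_of_two_inner_eq {α β : E} {n : ℤ} (hnorm : ‖β‖ = ‖α‖) (hne : β ≠ α)
    (hn : 2 * ⟪β, α⟫_ℝ = n * ‖α‖ ^ 2) : n ≤ 1 := by
  have hpos : 0 < ‖β - α‖ ^ 2 := by positivity [sub_ne_zero.mpr hne]
  rw [norm_sub_sq_real, hn, hnorm] at hpos
  have : (n : ℝ) * ‖α‖ ^ 2 < 2 * ‖α‖ ^ 2 := by linarith
  have := lt_of_mul_lt_mul_right this (sq_nonneg _)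
  exact Int.lt_add_one_iff.mp (by exact_mod_cast this)

theorem rsRefl_eq_sub_smul {α β : E} {n : ℤ} (hα : α ≠ 0) (hn : 2 * ⟪β, α⟫_ℝ = n * ‖α‖ ^ 2) :
    rsRefl α β = β - (n : ℝ) • α := by
  have : (0 : ℝ) < ‖α‖ ^ 2 := by positivity
  rw [rsRefl, real_inner_self_eq_norm_sq, hn, mul_div_cancel_right₀ _ this.ne']

theorem foldProj_mem_folded (θ : E ≃ₗᵢ[ℝ] E) (m : ℕ) {Φ : Finset E} {α : E} (hα : α ∈ Φ) :
    foldProj θ m α ∈ folded θ m Φ := by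
  classical
  exact mem_image_of_mem _ hα

end Folding

structure IsSimplyLacedFolding {E : Type*} [NormedAddCommGroup E] [InnerProductSpace ℝ E]
    (Φ : Finset E) (θ : E ≃ₗᵢ[ℝ] E) : Prop where
  rsRefl_mem : ∀ α ∈ Φ, ∀ β ∈ Φ, rsRefl α β ∈ Φ
  cartan_int : ∀ α ∈ Φ, ∀ β ∈ Φ, ∃ n : ℤ, (2 * ⟪β, α⟫_ℝ / ⟪α, α⟫_ℝ) = n
  norm_eq : ∀ α ∈ Φ, ∀ β ∈ Φ, ‖α‖ = ‖β‖
  involutive : Function.Involutive θ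
  map_mem : ∀ α ∈ Φ, θ α ∈ Φ
  folded_reduced : ∀ v ∈ folded θ 2 Φ, ∀ t : ℝ, t • v ∈ folded θ 2 Φ → t = 1 ∨ t = -1

namespace IsSimplyLacedFolding

variable {E : Type*} [NormedAddCommGroup E] [InnerProductSpace ℝ E]
  {Φ : Finset E} {θ : E ≃ₗᵢ[ℝ] E} {α β γ : E}

theorem foldProj_ne_zero (hF : IsSimplyLacedFolding Φ θ) (hα : α ∈ Φ) : foldProj θ 2 α ≠ 0 :=
  fun h => zero_notMem_of_reduced hF.folded_reduced (h ▸ foldProj_mem_folded θ 2 hα)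

theorem ne_zero (hF : IsSimplyLacedFolding Φ θ) (hα : α ∈ Φ) : α ≠ 0 := by
  rintro rfl
  exact hF.foldProj_ne_zero hα (by simp [foldProj_two_apply])

theorem exists_two_inner_eq (hF : IsSimplyLacedFolding Φ θ) (hα : α ∈ Φ) (hβ : β ∈ Φ) :
    ∃ n : ℤ, 2 * ⟪β, α⟫_ℝ = n * ‖α‖ ^ 2 := by
  obtain ⟨n, hn⟩ := hF.cartan_int α hα β hβ
  have : (0 : ℝ) < ‖α‖ ^ 2 := by positivity [hF.ne_zero hα]
  rw [real_inner_self_eq_norm_sq, div_eq_iff this.ne'] at hn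
  exact ⟨n, hn⟩

theorem inner_map_self_eq_zero (hF : IsSimplyLacedFolding Φ θ) (hα : α ∈ Φ) (hfix : θ α ≠ α) :
    ⟪α, θ α⟫_ℝ = 0 := by
  have hθα := hF.map_mem α hα
  obtain ⟨n, hn⟩ := hF.exists_two_inner_eq hθα hα
  have hn1 : n ≤ 1 :=
    int_le_one_of_two_inner_eq ((θ.norm_map α).symm) (Ne.symm hfix) hn
  have hrefl : foldProj θ 2 (rsRefl (θ α) α) = ((1 : ℝ) - n) • foldProj θ 2 α := by
    rw [rsRefl_eq_sub_smul (hF.ne_zero hθα) hn, foldProj_sub, foldProj_smul,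
      foldProj_two_map hF.involutive, sub_smul, one_smul]
  have hmem := foldProj_mem_folded θ 2 (hF.rsRefl_mem _ hθα α hα)
  rw [hrefl] at hmem
  have hn0 : n = 0 := by
    have : (n : ℝ) = 0 ∨ (n : ℝ) = 2 := by
      rcases hF.folded_reduced _ (foldProj_mem_folded θ 2 hα) _ hmem with h | h
      · left; linarith
      · right; linarith
    norm_cast at this
    omega
  rw [hn0, Int.cast_zero, zero_mul, mul_eq_zero] at hn
  exact hn.resolve_left two_ne_zero

theorem norm_foldProj_sq (hF : IsSimplyLacedFolding Φ θ) (hα : α ∈ Φ) (hfix : θ α ≠ α) :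
    ‖foldProj θ 2 α‖ ^ 2 = ‖α‖ ^ 2 / 2 := by
  rw [foldProj_two_apply, norm_smul, mul_pow, norm_add_sq_real,
    hF.inner_map_self_eq_zero hα hfix, θ.norm_map, Real.norm_of_nonneg (by norm_num)]
  ring

theorem eq_or_eq_map_of_foldProj_eq (hF : IsSimplyLacedFolding Φ θ) (hβ : β ∈ Φ) (hγ : γ ∈ Φ)
    (h : foldProj θ 2 β = foldProj θ 2 γ) : γ = β ∨ γ = θ β := by
  by_contra! hne
  have hθβ := hF.map_mem β hβ
  have hsum : β + θ β = γ + θ γ := by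
    rw [foldProj_two_apply, foldProj_two_apply] at h
    exact smul_right_injective E (by norm_num) h
  have hθγ : 0 ≤ ⟪θ γ, γ⟫_ℝ := by
    by_cases hfix : θ γ = γ
    · rw [hfix]; exact real_inner_self_nonneg
    · rw [real_inner_comm, hF.inner_map_self_eq_zero hγ hfix]
  have hinner : ‖γ‖ ^ 2 ≤ ⟪β, γ⟫_ℝ + ⟪θ β, γ⟫_ℝ := by
    rw [← inner_add_left, hsum, inner_add_left, real_inner_self_eq_norm_sq]
    linarith
  obtain ⟨n₁, hn₁⟩ := hF.exists_two_inner_eq hγ hβ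
  obtain ⟨n₂, hn₂⟩ := hF.exists_two_inner_eq hγ hθβ
  have h₁ := int_le_one_of_two_inner_eq (hF.norm_eq β hβ γ hγ) (Ne.symm hne.1) hn₁
  have h₂ := int_le_one_of_two_inner_eq (hF.norm_eq _ hθβ γ hγ) (Ne.symm hne.2) hn₂
  -- each Cartan integer is at most `1` and they sum to at least `2`, so `β - γ` is a root
  have hn₁1 : n₁ = 1 := by
    have hγ0 : (0 : ℝ) < ‖γ‖ ^ 2 := by positivity [hF.ne_zero hγ]
    have : (2 : ℝ) * ‖γ‖ ^ 2 ≤ (n₁ + n₂) * ‖γ‖ ^ 2 := by linarith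
    have : (2 : ℤ) ≤ n₁ + n₂ := by exact_mod_cast le_of_mul_le_mul_right this hγ0
    omega
  have hmem := foldProj_mem_folded θ 2 (hF.rsRefl_mem γ hγ β hβ)
  rw [rsRefl_eq_sub_smul (hF.ne_zero hγ) hn₁, hn₁1, Int.cast_one, one_smul, foldProj_sub, h,
    sub_self] at hmem
  exact zero_notMem_of_reduced hF.folded_reduced hmem

theorem norm_foldProj_eq_iff (hF : IsSimplyLacedFolding Φ θ) {s l : ℝ}
    (h2 : TwoLengths (folded θ 2 Φ) s l) (hβ : β ∈ Φ) : ‖foldProj θ 2 β‖ = s ↔ θ β ≠ β := by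
  classical
  obtain ⟨hs0, hsl, -, ⟨_, has, hs⟩, ⟨_, hbl, hl⟩⟩ := h2
  obtain ⟨a, ha, rfl⟩ := mem_image.mp has
  obtain ⟨b, hb, rfl⟩ := mem_image.mp hbl
  have hafix : θ a ≠ a := by
    intro hfix
    have := norm_foldProj_le θ 2 b
    rw [foldProj_of_map_eq θ two_ne_zero hfix] at hs
    rw [hl, hF.norm_eq b hb a ha, hs] at this
    linarith
  have hs2 : s ^ 2 = ‖β‖ ^ 2 / 2 := by
    rw [← hs, hF.norm_foldProj_sq ha hafix, hF.norm_eq a ha β hβ]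
  constructor
  · intro h hfix
    rw [foldProj_of_map_eq θ two_ne_zero hfix] at h
    rw [h] at hs2
    nlinarith
  · intro hfix
    rw [← sq_eq_sq₀ (norm_nonneg _) hs0.le, hs2, hF.norm_foldProj_sq hβ hfix]

theorem filter_foldProj_eq [DecidableEq E] (hF : IsSimplyLacedFolding Φ θ) {pos : Finset E}
    (hpos : pos ⊆ Φ) (hposθ : ∀ α ∈ pos, θ α ∈ pos) (hβ : β ∈ pos) :
    pos.filter (fun γ => foldProj θ 2 γ = foldProj θ 2 β) = {β, θ β} := by
  ext γ
  simp only [mem_filter, mem_insert, mem_singleton]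
  constructor
  · rintro ⟨hγ, h⟩
    exact hF.eq_or_eq_map_of_foldProj_eq (hpos hβ) (hpos hγ) h.symm
  · rintro (rfl | rfl)
    · exact ⟨hβ, rfl⟩
    · exact ⟨hposθ β hβ, foldProj_two_map hF.involutive β⟩

theorem sum_filter_foldProj_eq [DecidableEq E] (hF : IsSimplyLacedFolding Φ θ) {s l : ℝ}
    (h2 : TwoLengths (folded θ 2 Φ) s l) {pos : Finset E} (hpos : pos ⊆ Φ)
    (hposθ : ∀ α ∈ pos, θ α ∈ pos) (hβ : β ∈ pos) :
    ∑ γ ∈ pos with foldProj θ 2 γ = foldProj θ 2 β, foldProj θ 2 γ =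
      foldProj θ 2 β + if ‖foldProj θ 2 β‖ = s then foldProj θ 2 β else 0 := by
  have hshort := hF.norm_foldProj_eq_iff h2 (hpos hβ)
  rw [hF.filter_foldProj_eq hpos hposθ hβ]
  by_cases hfix : θ β = β
  · simp [hfix, hshort]
  · rw [sum_pair (Ne.symm hfix), foldProj_two_map hF.involutive, if_pos (hshort.mpr hfix)]

end IsSimplyLacedFolding

/-- Here `Φ` is the (simply laced) root system of `g`, `p = foldProj θ 2` the restriction map,
`folded θ 2 Φ` the root system `Φ₀` of `g₀`, and `ρ`, `ρ₀`, `ρ_s` are `halfSum pos`,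
`halfSum (folded θ 2 pos)` and `halfSum (ofLength (folded θ 2 pos) s)`. -/
theorem stmt7_general {E : Type*} [NormedAddCommGroup E] [InnerProductSpace ℝ E]
    (Φ pos : Finset E) (hRS : IsRootSystem Φ) (hpos : IsPositiveSystem Φ pos)
    (hlaced : ∀ α ∈ Φ, ∀ β ∈ Φ, ‖α‖ = ‖β‖)
    (θ : E ≃ₗᵢ[ℝ] E) (hord : (⇑θ)^[2] = id)
    (hΦθ : ∀ α ∈ Φ, θ α ∈ Φ) (hposθ : ∀ α ∈ pos, θ α ∈ pos)
    (s l : ℝ) (h2 : TwoLengths (folded θ 2 Φ) s l)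
    (hred : ∀ v ∈ folded θ 2 Φ, ∀ t : ℝ, t • v ∈ folded θ 2 Φ → t = 1 ∨ t = -1)
 :
    foldProj θ 2 (halfSum pos) - halfSum (folded θ 2 pos) = halfSum (ofLength (folded θ 2 pos) s) := by
  classical
  obtain ⟨-, -, hrefl, hint, -⟩ := hRS
  have hF : IsSimplyLacedFolding Φ θ :=
    ⟨hrefl, hint, hlaced, fun v => congrFun hord v, hΦθ, hred⟩
  have hposΦ : pos ⊆ Φ := by
    obtain ⟨f, -, rfl⟩ := hpos
    exact filter_subset _ _
  -- every short root of `Φ₀` is the image of exactly two positive roots, every long one of one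
  have hsum : ∑ β ∈ pos, foldProj θ 2 β =
      ∑ v ∈ folded θ 2 pos, v + ∑ v ∈ ofLength (folded θ 2 pos) s, v := by
    rw [ofLength, sum_filter, ← sum_add_distrib]
    exact (sum_image' _ fun β hβ => (hF.sum_filter_foldProj_eq h2 hposΦ hposθ hβ).symm).symm
  rw [halfSum, foldProj_smul, foldProj_sum, hsum, halfSum, halfSum, smul_add, add_sub_cancel_left]

/-- in the order-2 diagram automorphism (folding) setup,
`p(ρ) - ρ₀ = ρ_s`. Here `Φ` is the (simply laced) root system of `g`, `θ` the
order-2 automorphism, `p = foldProj θ 2` the restriction map, the folded system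
`folded θ 2 Φ` is the root system `Φ₀` of the fixed subalgebra `g₀`, `ρ, ρ₀` the
half sums of positive roots and `ρ_s` the half sum of the positive short roots of `Φ₀`. -/
theorem stmt7 {E : Type*} [NormedAddCommGroup E] [InnerProductSpace ℝ E]
    (Φ pos : Finset E) (hRS : IsRootSystem Φ) (hpos : IsPositiveSystem Φ pos)
    (hirr : RSIrreducible Φ) (hlaced : ∀ α ∈ Φ, ∀ β ∈ Φ, ‖α‖ = ‖β‖)
    (θ : E ≃ₗᵢ[ℝ] E) (hord : (⇑θ)^[2] = id) (hne : ⇑θ ≠ id)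
    (hΦθ : ∀ α ∈ Φ, θ α ∈ Φ) (hposθ : ∀ α ∈ pos, θ α ∈ pos)
    (s l : ℝ) (h2 : TwoLengths (folded θ 2 Φ) s l)
    (hred : ∀ v ∈ folded θ 2 Φ, ∀ t : ℝ, t • v ∈ folded θ 2 Φ → t = 1 ∨ t = -1)
 :
    foldProj θ 2 (halfSum pos) - halfSum (folded θ 2 pos) = halfSum (ofLength (folded θ 2 pos) s) :=
  stmt7_general Φ pos hRS hpos hlaced θ hord hΦθ hposθ s l h2 hred
end

section
/- For the pair (A_{2n−1}, C_n) with n odd arising from the order-2 diagram automorphism of sl_{2n}, the weight p(ρ) is not in the root lattice of C_n; moreover, setting μ = (2n−1)ϖ₁ (with ϖ₁ the first fundamental weight of C_n), the difference p(ρ) − μ is a non-negative integral combination of positive short roots of C_n, yet p(ρ) − μ is not of the form p(ρ) − ρ₀ − sum(Ψ) for any subset Ψ of the positive short roots; hence V₀(p(ρ)−ρ₀)_{μ−ρ₀} = 0. -/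
open scoped InnerProductSpace
open Finset

noncomputable section
open Finset

/-- The standard basis vector `e_i` of `ℝⁿ`. -/
def eps (n : ℕ) (i : Fin n) : EuclideanSpace ℝ (Fin n) := EuclideanSpace.single i 1

open scoped Classical in
/-- The positive short roots `e_i - e_j`, `e_i + e_j` (`i < j`) of the root system `Cₙ`. -/
def CnShortPos (n : ℕ) : Finset (EuclideanSpace ℝ (Fin n)) :=
  ((univ ×ˢ univ).filter fun p : Fin n × Fin n => p.1 < p.2).image
      (fun p => eps n p.1 - eps n p.2) ∪
    ((univ ×ˢ univ).filter fun p : Fin n × Fin n => p.1 < p.2).image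
      (fun p => eps n p.1 + eps n p.2)

open scoped Classical in
/-- The positive long roots `2e_i` of `Cₙ`. -/
def CnLongPos (n : ℕ) : Finset (EuclideanSpace ℝ (Fin n)) :=
  univ.image fun i : Fin n => (2 : ℝ) • eps n i

open scoped Classical in
/-- The positive roots of `Cₙ`. -/
def CnPos (n : ℕ) : Finset (EuclideanSpace ℝ (Fin n)) := CnShortPos n ∪ CnLongPos n

open scoped Classical in
/-- The root system `Cₙ`. -/
def CnRoots (n : ℕ) : Finset (EuclideanSpace ℝ (Fin n)) :=
  CnPos n ∪ (CnPos n).image fun v => -v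

/-- `p(ρ) = (2n-1, 2n-3, …, 1)`: the restriction to `h₀` of the half sum of positive
roots of `A_{2n-1}` under the order-2 diagram automorphism folding `sl_{2n}` to `sp_{2n}`. -/
def pRhoC (n : ℕ) : EuclideanSpace ℝ (Fin n) :=
  ∑ i : Fin n, ((2 * (n : ℝ)) - 1 - 2 * (i : ℕ)) • eps n i

/-- `ρ₀ = (n, n-1, …, 1)`: the half sum of positive roots of `Cₙ`. -/
def rhoC (n : ℕ) : EuclideanSpace ℝ (Fin n) :=
  ∑ i : Fin n, ((n : ℝ) - (i : ℕ)) • eps n i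


/-! The coordinate sum is even on every root of `Cₙ` but equals `n²` on `p(ρ)`.

With `n = 2m + 1`, the vector `p(ρ) - μ = (0, 2n-3, …, 3, 1)` splits into consecutive coordinate
pairs `(b + 2, b)`, each equal to `(b + 1)(e_p + e_q) + (e_p - e_q)`.

The functional `x₁ - x₀` is at most `1` on the positive short roots and positive only on the
`2(n - 2)` roots `e₁ ± e_q`, yet it takes the value `2n - 3` on `p(ρ) - μ`; so `p(ρ) - μ` is not a
sum of distinct positive short roots.

Weyl group elements are isometries, so every weight of `V₀(λ)` has norm at most `‖λ‖`, while
`‖μ - ρ₀‖ > ‖p(ρ) - ρ₀‖`. -/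

lemma Fin.sum_univ_mul_two_add_one {M : Type*} [AddCommMonoid M] (m : ℕ)
    (g : Fin (m * 2 + 1) → M) :
    ∑ j, g j = g 0 + ∑ k : Fin m, (g ⟨2 * k + 1, by omega⟩ + g ⟨2 * k + 2, by omega⟩) := by
  rw [Fin.sum_univ_succ, ← finProdFinEquiv.sum_comp, Fintype.sum_prod_type]
  simp only [Fin.sum_univ_two]
  congr! 4 with k <;> simp [Fin.ext_iff, finProdFinEquiv]; omega

lemma sum_le_card_filter_pos {ι : Type*} {S Ψ : Finset ι} (hΨ : Ψ ⊆ S) (f : ι → ℝ)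
    (hf : ∀ a ∈ S, f a ≤ 1) : ∑ a ∈ Ψ, f a ≤ #{a ∈ S | 0 < f a} := by
  classical
  calc ∑ a ∈ Ψ, f a ≤ ∑ a ∈ Ψ, if 0 < f a then (1 : ℝ) else 0 :=
        sum_le_sum fun a ha => by split_ifs with h <;> [exact hf a (hΨ ha); exact not_lt.mp h]
    _ = #{a ∈ Ψ | 0 < f a} := by rw [sum_boole]
    _ ≤ #{a ∈ S | 0 < f a} := by exact_mod_cast card_le_card (filter_subset_filter _ hΨ)

lemma exists_nat_coeffs_of_mem_closure {E : Type*} [AddCommGroup E] [Module ℝ E] {S : Finset E}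
    {x : E} (hx : x ∈ AddSubmonoid.closure (S : Set E)) :
    ∃ c : E → ℕ, x = ∑ α ∈ S, (c α : ℝ) • α := by
  obtain ⟨c, -, rfl⟩ := AddSubmonoid.mem_closure_finset.mp hx
  exact ⟨c, by simp only [Nat.cast_smul_eq_nsmul]⟩

section WeylIsometry

variable {E : Type*} [NormedAddCommGroup E] [InnerProductSpace ℝ E]

lemma norm_rsRefl (α v : E) : ‖rsRefl α v‖ = ‖v‖ := by
  rcases eq_or_ne α 0 with rfl | hα
  · simp [rsRefl]
  have hα2 : ‖α‖ ^ 2 ≠ 0 := by positivity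
  have hsq : ‖rsRefl α v‖ ^ 2 = ‖v‖ ^ 2 := by
    rw [rsRefl, norm_sub_sq_real, real_inner_smul_right, norm_smul, mul_pow, Real.norm_eq_abs,
      sq_abs, real_inner_self_eq_norm_sq]
    field_simp
    ring
  exact (sq_eq_sq₀ (norm_nonneg _) (norm_nonneg _)).mp hsq

lemma norm_apply_of_mem_weylGroup {Φ : Finset E} {g : E ≃ₗ[ℝ] E} (hg : g ∈ weylGroup Φ)
    (v : E) : ‖g v‖ = ‖v‖ := by
  induction hg using Subgroup.closure_induction generalizing v with
  | mem g hg => obtain ⟨α, -, hgα⟩ := hg; rw [hgα, norm_rsRefl]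
  | one => rfl
  | mul g h _ _ ihg ihh => exact (ihg _).trans (ihh v)
  | inv g _ ih => simpa using (ih (g⁻¹ v)).symm

lemma convexHull_weylOrbit_subset_closedBall (Φ : Finset E) (lam : E) :
    convexHull ℝ (weylOrbit Φ lam) ⊆ Metric.closedBall 0 ‖lam‖ :=
  convexHull_min (by rintro _ ⟨g, hg, rfl⟩; simp [norm_apply_of_mem_weylGroup hg])
    (convex_closedBall 0 _)

lemma norm_le_of_isWeight {Φ : Finset E} {lam β : E} (h : isWeight Φ lam β) :
    ‖β‖ ≤ ‖lam‖ := by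
  simpa using convexHull_weylOrbit_subset_closedBall Φ lam h.1

end WeylIsometry

lemma eps_apply (n : ℕ) (i j : Fin n) : eps n i j = if j = i then 1 else 0 := by
  simp [eps, PiLp.single_apply]

lemma sum_smul_eps_apply (n : ℕ) (a : Fin n → ℝ) (j : Fin n) :
    (∑ i, a i • eps n i) j = a j := by
  simp [eps_apply]

lemma pRhoC_apply (n : ℕ) (j : Fin n) : pRhoC n j = 2 * n - 1 - 2 * (j : ℕ) :=
  sum_smul_eps_apply n _ j

lemma rhoC_apply (n : ℕ) (j : Fin n) : rhoC n j = n - (j : ℕ) :=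
  sum_smul_eps_apply n _ j

lemma mem_CnShortPos {n : ℕ} {α : EuclideanSpace ℝ (Fin n)} :
    α ∈ CnShortPos n ↔
      ∃ p q : Fin n, p < q ∧ (α = eps n p - eps n q ∨ α = eps n p + eps n q) := by
  classical
  simp only [CnShortPos, mem_union, mem_image, mem_filter, mem_product, mem_univ, true_and,
    Prod.exists]
  grind

def coordSum (n : ℕ) : EuclideanSpace ℝ (Fin n) →ₗ[ℝ] ℝ where
  toFun x := ∑ i, x i
  map_add' x y := by simp [Finset.sum_add_distrib]
  map_smul' c x := by simp [Finset.mul_sum]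

lemma coordSum_eps (n : ℕ) (i : Fin n) : coordSum n (eps n i) = 1 := by
  simp [coordSum, eps_apply]

lemma coordSum_pRhoC (n : ℕ) : coordSum n (pRhoC n) = (n : ℝ) ^ 2 := by
  have partial_sum : ∀ k, ∑ i ∈ range k, (2 * (n : ℝ) - 1 - 2 * i) = k * (2 * n - k) := by
    intro k
    induction k with
    | zero => simp
    | succ k ih => rw [sum_range_succ, ih]; push_cast; ring
  simp only [coordSum, LinearMap.coe_mk, AddHom.coe_mk, pRhoC_apply]
  rw [Fin.sum_univ_eq_sum_range (fun i => 2 * (n : ℝ) - 1 - 2 * i), partial_sum]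
  ring

lemma coordSum_mem_zmultiples_two {n : ℕ} {α : EuclideanSpace ℝ (Fin n)} (hα : α ∈ CnRoots n) :
    coordSum n α ∈ AddSubgroup.zmultiples (2 : ℝ) := by
  have hpos : ∀ β ∈ CnPos n, coordSum n β ∈ AddSubgroup.zmultiples (2 : ℝ) := by
    intro β hβ
    rcases mem_union.mp hβ with hβ | hβ
    · obtain ⟨p, q, -, rfl | rfl⟩ := mem_CnShortPos.mp hβ
      · exact ⟨0, by simp [coordSum_eps]⟩
      · exact ⟨1, by norm_num [coordSum_eps]⟩
    · obtain ⟨i, -, rfl⟩ := mem_image.mp hβ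
      exact ⟨1, by simp [coordSum_eps]⟩
  rcases mem_union.mp hα with hα | hα
  · exact hpos α hα
  · obtain ⟨β, hβ, rfl⟩ := mem_image.mp hα
    simpa using neg_mem (hpos β hβ)

lemma pRhoC_notMem_rootLattice {n : ℕ} (hodd : Odd n) :
    pRhoC n ∉ AddSubgroup.closure (CnRoots n : Set (EuclideanSpace ℝ (Fin n))) := by
  intro hmem
  have hle : AddSubgroup.closure (CnRoots n : Set (EuclideanSpace ℝ (Fin n))) ≤
      (AddSubgroup.zmultiples (2 : ℝ)).comap (coordSum n).toAddMonoidHom :=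
    (AddSubgroup.closure_le _).mpr fun α hα => coordSum_mem_zmultiples_two hα
  obtain ⟨k, hk⟩ := hle hmem
  simp only [LinearMap.toAddMonoidHom_coe, coordSum_pRhoC, zsmul_eq_mul] at hk
  have hk : k * 2 = ((n ^ 2 : ℕ) : ℤ) := by exact_mod_cast hk
  have hsq_odd : ((n ^ 2 : ℕ) : ℤ) % 2 = 1 := by exact_mod_cast Nat.odd_iff.mp hodd.pow
  omega

lemma smul_eps_add_smul_eps_mem_closure_CnShortPos {n : ℕ} {p q : Fin n} (hpq : p < q) (b : ℕ) :
    ((b : ℝ) + 2) • eps n p + (b : ℝ) • eps n q ∈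
      AddSubmonoid.closure (CnShortPos n : Set (EuclideanSpace ℝ (Fin n))) := by
  have hsum : ((b : ℝ) + 2) • eps n p + (b : ℝ) • eps n q =
      (b + 1) • (eps n p + eps n q) + (eps n p - eps n q) := by
    rw [← Nat.cast_smul_eq_nsmul ℝ]; push_cast; module
  rw [hsum]
  refine add_mem (nsmul_mem (AddSubmonoid.subset_closure ?_) _) (AddSubmonoid.subset_closure ?_)
  · exact mem_CnShortPos.mpr ⟨p, q, hpq, Or.inr rfl⟩
  · exact mem_CnShortPos.mpr ⟨p, q, hpq, Or.inl rfl⟩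

lemma pRhoC_sub_mem_closure_CnShortPos {n : ℕ} (hodd : Odd n) (hn : 1 < n) :
    pRhoC n - ((2 * (n : ℝ)) - 1) • eps n ⟨0, Nat.zero_lt_of_lt hn⟩ ∈
      AddSubmonoid.closure (CnShortPos n : Set (EuclideanSpace ℝ (Fin n))) := by
  obtain ⟨m, rfl⟩ : ∃ m, n = m * 2 + 1 := ⟨n / 2, by rcases hodd with ⟨k, rfl⟩; omega⟩
  have hpairs :
      pRhoC (m * 2 + 1) - ((2 * ((m * 2 + 1 : ℕ) : ℝ)) - 1) • eps _ ⟨0, Nat.zero_lt_of_lt hn⟩ =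
        ∑ k : Fin m, ((((4 * (m - 1 - k) + 1 : ℕ) : ℝ) + 2) • eps _ ⟨2 * k + 1, by omega⟩ +
          ((4 * (m - 1 - k) + 1 : ℕ) : ℝ) • eps _ ⟨2 * k + 2, by omega⟩) := by
    rw [pRhoC, Fin.sum_univ_mul_two_add_one, Fin.val_zero, Fin.mk_zero, Nat.cast_zero, mul_zero,
      sub_zero, add_sub_cancel_left]
    refine sum_congr rfl fun k _ => ?_
    have hk : 1 + (k : ℕ) ≤ m := by omega
    congr 2 <;> push_cast [Nat.sub_sub, Nat.cast_sub hk] <;> ring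
  rw [hpairs]
  exact sum_mem fun k _ =>
    smul_eps_add_smul_eps_mem_closure_CnShortPos (Fin.mk_lt_mk.mpr (by omega)) _

lemma CnShortPos_coord_one_sub_coord_zero {n : ℕ} (hn : 1 < n) {α : EuclideanSpace ℝ (Fin n)}
    (hα : α ∈ CnShortPos n) :
    α ⟨1, hn⟩ - α ⟨0, Nat.zero_lt_of_lt hn⟩ ≤ 1 ∧
      (0 < α ⟨1, hn⟩ - α ⟨0, Nat.zero_lt_of_lt hn⟩ → ∃ q : Fin n, 1 < (q : ℕ) ∧
        (α = eps n ⟨1, hn⟩ - eps n q ∨ α = eps n ⟨1, hn⟩ + eps n q)) := by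
  obtain ⟨p, q, hpq, rfl | rfl⟩ := mem_CnShortPos.mp hα <;>
  · rw [Fin.lt_def] at hpq
    simp only [PiLp.sub_apply, PiLp.add_apply, eps_apply, Fin.ext_iff]
    split_ifs <;> first | omega | norm_num
    obtain rfl : p = ⟨1, hn⟩ := Fin.ext (by dsimp only; omega)
    exact ⟨q, by simpa using hpq, by simp⟩

lemma card_CnShortPos_filter_coord_one_sub_coord_zero_pos {n : ℕ} (hn : 1 < n) :
    #{α ∈ CnShortPos n | 0 < α ⟨1, hn⟩ - α ⟨0, Nat.zero_lt_of_lt hn⟩} ≤ 2 * (n - 2) := by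
  classical
  set J : Finset (Fin n) := Ioi ⟨1, hn⟩
  calc #{α ∈ CnShortPos n | 0 < α ⟨1, hn⟩ - α ⟨0, Nat.zero_lt_of_lt hn⟩}
      ≤ #(J.image (eps n ⟨1, hn⟩ - eps n ·) ∪ J.image (eps n ⟨1, hn⟩ + eps n ·)) := by
        refine card_le_card fun α hα => ?_
        obtain ⟨hα, hpos⟩ := mem_filter.mp hα
        obtain ⟨q, hq, rfl | rfl⟩ := (CnShortPos_coord_one_sub_coord_zero hn hα).2 hpos
        · exact mem_union_left _ (mem_image_of_mem _ (mem_Ioi.mpr (Fin.lt_def.mpr hq)))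
        · exact mem_union_right _ (mem_image_of_mem _ (mem_Ioi.mpr (Fin.lt_def.mpr hq)))
    _ ≤ #J + #J := (card_union_le _ _).trans (add_le_add card_image_le card_image_le)
    _ = 2 * (n - 2) := by simp only [J, Fin.card_Ioi]; omega

lemma not_exists_subset_CnShortPos_sum_eq {n : ℕ} (hn : 1 < n) (v : EuclideanSpace ℝ (Fin n))
    (hv : (2 * n - 3 : ℝ) ≤ v ⟨1, hn⟩ - v ⟨0, Nat.zero_lt_of_lt hn⟩) :
    ¬ ∃ Ψ ⊆ CnShortPos n, v = ∑ α ∈ Ψ, α := by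
  rintro ⟨Ψ, hΨ, rfl⟩
  have hle := sum_le_card_filter_pos hΨ (fun α => α ⟨1, hn⟩ - α ⟨0, Nat.zero_lt_of_lt hn⟩)
    fun α hα => (CnShortPos_coord_one_sub_coord_zero hn hα).1
  have hcard := card_CnShortPos_filter_coord_one_sub_coord_zero_pos hn
  rw [← Nat.cast_le (α := ℝ), Nat.cast_mul, Nat.cast_sub (by omega)] at hcard
  simp only [WithLp.ofLp_sum, Finset.sum_apply, ← sum_sub_distrib] at hv
  push_cast at hcard
  linarith

lemma norm_pRhoC_sub_rhoC_lt {n : ℕ} (hn : 1 < n) :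
    ‖pRhoC n - rhoC n‖ < ‖((2 * (n : ℝ)) - 1) • eps n ⟨0, Nat.zero_lt_of_lt hn⟩ - rhoC n‖ := by
  refine lt_of_pow_lt_pow_left₀ 2 (norm_nonneg _) ?_
  simp only [EuclideanSpace.real_norm_sq_eq, PiLp.sub_apply, PiLp.smul_apply, pRhoC_apply,
    rhoC_apply, eps_apply, smul_eq_mul]
  refine sum_lt_sum (fun j _ => ?_) ⟨⟨1, hn⟩, mem_univ _, ?_⟩
  · have hj : (j : ℝ) + 1 ≤ n := by exact_mod_cast j.isLt
    split_ifs with h0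
    · subst h0; simp
    · have : (1 : ℝ) ≤ j := by
        exact_mod_cast Nat.one_le_iff_ne_zero.mpr fun h => h0 (Fin.ext h)
      nlinarith
  · have : (2 : ℝ) ≤ n := by exact_mod_cast hn
    simp only [Fin.mk.injEq, one_ne_zero, if_false]
    push_cast
    nlinarith

/-- for the pair `(A_{2n-1}, Cₙ)` with `n` odd, `p(ρ)` is not in the root
lattice of `Cₙ`; for `μ = (2n-1)ϖ₁`, the difference `p(ρ) - μ` is a non-negative
integral combination of positive short roots, yet it is not a sum of *distinct*
positive short roots (i.e. not of the form `p(ρ) - ρ₀ - sum(Ψ)` with `β = μ - ρ₀`),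
and `V₀(p(ρ)-ρ₀)_{μ-ρ₀} = 0`. -/
theorem stmt18 (n : ℕ) (hodd : Odd n) (hn : 1 < n) :
    pRhoC n ∉ AddSubgroup.closure ((CnRoots n : Finset (EuclideanSpace ℝ (Fin n))) :
        Set (EuclideanSpace ℝ (Fin n))) ∧
    (∃ c : EuclideanSpace ℝ (Fin n) → ℕ,
        pRhoC n - ((2 * (n : ℝ)) - 1) • eps n ⟨0, by omega⟩
          = ∑ α ∈ CnShortPos n, (c α : ℝ) • α) ∧
    (¬ ∃ Ψ ⊆ CnShortPos n,
        pRhoC n - ((2 * (n : ℝ)) - 1) • eps n ⟨0, by omega⟩ = ∑ v ∈ Ψ, v) ∧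
    ¬ isWeight (CnRoots n) (pRhoC n - rhoC n)
        (((2 * (n : ℝ)) - 1) • eps n ⟨0, by omega⟩ - rhoC n) := by
  have hcoord :
      (2 * n - 3 : ℝ) ≤ (pRhoC n - ((2 * (n : ℝ)) - 1) • eps n ⟨0, by omega⟩) ⟨1, hn⟩ -
        (pRhoC n - ((2 * (n : ℝ)) - 1) • eps n ⟨0, by omega⟩) ⟨0, by omega⟩ := by
    simp only [PiLp.sub_apply, PiLp.smul_apply, pRhoC_apply, eps_apply, smul_eq_mul,
      Fin.mk.injEq, one_ne_zero, ↓reduceIte, Nat.cast_one, Nat.cast_zero]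
    linarith
  exact ⟨pRhoC_notMem_rootLattice hodd,
    exists_nat_coeffs_of_mem_closure (pRhoC_sub_mem_closure_CnShortPos hodd hn),
    not_exists_subset_CnShortPos_sum_eq hn _ hcoord,
    fun h => (norm_pRhoC_sub_rhoC_lt hn).not_ge (norm_le_of_isWeight h)⟩

end
end
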